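/- arXiv:1909.08295 — 3 statements merged into one kernel-verified Lean document; each statement's English description precedes it below -/
import Mathlib

section
/- Let σ > 0 and α ∈ (0,1) with α < σ + 1/2. Then the Gagliardo (Slobodeckij) double integral of the power function x ↦ x^σ on (0,1) is finite: ∫₀¹ ∫₀¹ (x^σ − y^σ)² / |x−y|^{1+2α} dx dy < ∞. -/
/-!
For `0 ≤ y ≤ x` and `β ≤ 1`, `x ^ σ - y ^ σ ≤ max 1 σ * x ^ (σ - β) * (x - y) ^ β`, so on `(0,1)²`
the integrand is at most `C * (1 + x ^ (2(σ - β))) * |x - y| ^ (2β - 1 - 2α)`.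
Any `β` with `α < β < min 1 (σ + 1/2)` makes both exponents exceed `-1`; by translation
invariance the inner integral of `|x - y| ^ (2β - 1 - 2α)` is then bounded uniformly in `x`,
and what is left is the integral of `1 + x ^ (2(σ - β))` over `(0,1)`.
-/

open MeasureTheory Set
open scoped ENNReal

namespace Real

/-- For `σ ≤ 1` this is `x ^ (σ - 1) * y ≤ y ^ σ`, for `σ ≥ 1` Bernoulli's inequality. -/
lemma rpow_sub_rpow_le_max_one_mul {σ x y : ℝ} (hσ : 0 < σ) (hy : 0 ≤ y) (hyx : y ≤ x) :
    x ^ σ - y ^ σ ≤ max 1 σ * x ^ (σ - 1) * (x - y) := by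
  rcases (hy.trans hyx).eq_or_lt with hx0 | hx0
  · obtain rfl : y = 0 := le_antisymm (hyx.trans hx0.ge) hy
    simp [← hx0]
  have hxσ : x ^ (σ - 1) * x = x ^ σ := by rw [← rpow_add_one hx0.ne', sub_add_cancel]
  rcases le_total σ 1 with hσ1 | hσ1
  · have hconc : x ^ (σ - 1) * y ≤ y ^ σ := by
      rcases hy.eq_or_lt with rfl | hy0
      · simp [zero_rpow hσ.ne']
      calc x ^ (σ - 1) * y ≤ y ^ (σ - 1) * y :=
            mul_le_mul_of_nonneg_right (rpow_le_rpow_of_nonpos hy0 hyx (by linarith)) hy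
        _ = y ^ σ := by rw [← rpow_add_one hy0.ne', sub_add_cancel]
    calc x ^ σ - y ^ σ ≤ x ^ (σ - 1) * (x - y) := by rw [mul_sub, hxσ]; linarith
      _ ≤ max 1 σ * x ^ (σ - 1) * (x - y) := by
        rw [mul_assoc]
        exact le_mul_of_one_le_left (mul_nonneg (rpow_nonneg hx0.le _) (sub_nonneg.2 hyx))
          (le_max_left _ _)
  · have hbern := one_add_mul_self_le_rpow_one_add
      (by linarith [div_nonneg hy hx0.le] : -1 ≤ y / x - 1) hσ1
    rw [add_sub_cancel, div_rpow hy hx0.le, le_div_iff₀ (rpow_pos_of_pos hx0 σ)] at hbern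
    calc x ^ σ - y ^ σ ≤ σ * x ^ (σ - 1) * (x - y) := by
          rw [← hxσ] at hbern ⊢
          field_simp at hbern
          nlinarith
      _ ≤ max 1 σ * x ^ (σ - 1) * (x - y) := by
        gcongr
        exact le_max_right _ _

lemma rpow_sub_rpow_le_mul_rpow_sub {σ β x y : ℝ} (hσ : 0 < σ) (hβ1 : β ≤ 1)
    (hy : 0 ≤ y) (hyx : y ≤ x) :
    x ^ σ - y ^ σ ≤ max 1 σ * x ^ (σ - β) * (x - y) ^ β := by
  rcases (hy.trans hyx).eq_or_lt with hx0 | hx0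
  · obtain rfl : y = 0 := le_antisymm (hyx.trans hx0.ge) hy
    simp only [← hx0, sub_self, zero_rpow hσ.ne']
    positivity
  have hxy : 0 ≤ x - y := sub_nonneg.2 hyx
  calc x ^ σ - y ^ σ ≤ max 1 σ * x ^ (σ - 1) * (x - y) :=
        rpow_sub_rpow_le_max_one_mul hσ hy hyx
    _ = max 1 σ * x ^ (σ - 1) * ((x - y) ^ β * (x - y) ^ (1 - β)) := by
        rw [← rpow_add' hxy (by norm_num), add_sub_cancel, rpow_one]
    _ ≤ max 1 σ * x ^ (σ - 1) * ((x - y) ^ β * x ^ (1 - β)) := by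
        gcongr
        exact sub_le_self x hy
    _ = max 1 σ * x ^ (σ - β) * (x - y) ^ β := by
        rw [show σ - β = (σ - 1) + (1 - β) by ring, rpow_add hx0]
        ring

lemma sq_rpow_sub_rpow_div_le {σ β r x y : ℝ} (hσ : 0 < σ) (hβ1 : β ≤ 1)
    (hx : 0 ≤ x) (hy : 0 ≤ y) :
    (x ^ σ - y ^ σ) ^ 2 / |x - y| ^ r ≤
      max 1 σ ^ 2 * max x y ^ (2 * (σ - β)) * |x - y| ^ (2 * β - r) := by
  wlog hyx : y ≤ x generalizing x y
  · rw [show (x ^ σ - y ^ σ) ^ 2 = (y ^ σ - x ^ σ) ^ 2 by ring, abs_sub_comm, max_comm x y]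
    exact this hy hx (le_of_not_ge hyx)
  rcases hyx.eq_or_lt with rfl | hlt
  · simp only [sub_self, abs_zero, ne_eq, OfNat.ofNat_ne_zero, not_false_eq_true, zero_pow,
      zero_div]
    positivity
  have hd : 0 < x - y := sub_pos.2 hlt
  have hx_sq : x ^ (2 * (σ - β)) = (x ^ (σ - β)) ^ 2 := by rw [mul_comm, rpow_mul hx, rpow_two]
  have hd_sq : (x - y) ^ (2 * β - r) * (x - y) ^ r = ((x - y) ^ β) ^ 2 := by
    rw [← rpow_add hd, sub_add_cancel, mul_comm, rpow_mul hd.le, rpow_two]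
  rw [max_eq_left hyx, abs_of_pos hd, div_le_iff₀ (rpow_pos_of_pos hd r)]
  calc (x ^ σ - y ^ σ) ^ 2 ≤ (max 1 σ * x ^ (σ - β) * (x - y) ^ β) ^ 2 :=
        pow_le_pow_left₀ (sub_nonneg.2 (rpow_le_rpow hy hyx hσ.le))
          (rpow_sub_rpow_le_mul_rpow_sub hσ hβ1 hy hyx) 2
    _ = max 1 σ ^ 2 * x ^ (2 * (σ - β)) * (x - y) ^ (2 * β - r) * (x - y) ^ r := by
        rw [hx_sq, mul_assoc _ ((x - y) ^ (2 * β - r)), hd_sq]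
        ring

lemma max_rpow_le_one_add_rpow {p x y : ℝ} (hx : 0 < x) (hx1 : x ≤ 1) (hy1 : y ≤ 1) :
    max x y ^ p ≤ 1 + x ^ p := by
  rcases le_total 0 p with hp | hp
  · calc max x y ^ p ≤ 1 := rpow_le_one (hx.le.trans (le_max_left _ _)) (max_le hx1 hy1) hp
      _ ≤ 1 + x ^ p := le_add_of_nonneg_right (rpow_nonneg hx.le _)
  · calc max x y ^ p ≤ x ^ p := rpow_le_rpow_of_nonpos hx (le_max_left _ _) hp
      _ ≤ 1 + x ^ p := le_add_of_nonneg_left zero_le_one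

end Real

lemma integrableOn_Ioo_abs_rpow {q : ℝ} (hq : -1 < q) (r : ℝ) :
    IntegrableOn (fun t : ℝ ↦ |t| ^ q) (Ioo (-r) r) := by
  rw [← Real.ball_zero_eq_Ioo]
  refine integrableOn_ball_of_norm_le_rpow (C := 1) (α := -q) (by simp) (by simp; linarith)
    (ae_of_all _ fun t ↦ ?_) (measurable_abs.pow_const q).aestronglyMeasurable
  simp [abs_of_nonneg (Real.rpow_nonneg (abs_nonneg t) q)]

lemma setLIntegral_Ioo_comp_sub_le {a b x : ℝ} (hx : x ∈ Ioo a b) (h : ℝ → ℝ≥0∞) :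
    ∫⁻ y in Ioo a b, h (x - y) ≤ ∫⁻ t in Ioo (a - b) (b - a), h t := by
  calc ∫⁻ y in Ioo a b, h (x - y)
      = ∫⁻ y in Ioo a b, (Ioo (a - b) (b - a)).indicator h (x - y) :=
        setLIntegral_congr_fun measurableSet_Ioo fun y hy ↦
          (indicator_of_mem (show x - y ∈ Ioo (a - b) (b - a) from
            ⟨by linarith [hx.1, hy.2], by linarith [hx.2, hy.1]⟩) h).symm
    _ ≤ ∫⁻ y, (Ioo (a - b) (b - a)).indicator h (x - y) := setLIntegral_le_lintegral _ _
    _ = ∫⁻ t in Ioo (a - b) (b - a), h t := by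
        rw [lintegral_sub_left_eq_self, lintegral_indicator measurableSet_Ioo]

lemma setLIntegral_setLIntegral_lt_top_of_le_mul_sub {a b : ℝ} {f : ℝ → ℝ → ℝ≥0∞}
    {g h : ℝ → ℝ≥0∞} (hh : Measurable h) (hg_int : ∫⁻ x in Ioo a b, g x < ∞)
    (hh_int : ∫⁻ t in Ioo (a - b) (b - a), h t < ∞)
    (hf : ∀ x ∈ Ioo a b, ∀ y ∈ Ioo a b, f x y ≤ g x * h (x - y)) :
    ∫⁻ x in Ioo a b, ∫⁻ y in Ioo a b, f x y < ∞ := by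
  set K := ∫⁻ t in Ioo (a - b) (b - a), h t
  calc ∫⁻ x in Ioo a b, ∫⁻ y in Ioo a b, f x y ≤ ∫⁻ x in Ioo a b, g x * K :=
        setLIntegral_mono' measurableSet_Ioo fun x hx ↦ calc
          ∫⁻ y in Ioo a b, f x y ≤ ∫⁻ y in Ioo a b, g x * h (x - y) :=
            setLIntegral_mono' measurableSet_Ioo (hf x hx)
          _ = g x * ∫⁻ y in Ioo a b, h (x - y) := lintegral_const_mul _ (by fun_prop)
          _ ≤ g x * K := by gcongr; exact setLIntegral_Ioo_comp_sub_le hx h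
    _ = (∫⁻ x in Ioo a b, g x) * K := lintegral_mul_const' _ _ hh_int.ne
    _ < ∞ := ENNReal.mul_lt_top hg_int hh_int

theorem power_function_gagliardo_finite_general (σ α : ℝ) (hσ : 0 < σ)
    (hα1 : α < 1) (hασ : α < σ + 1 / 2) :
    ∫⁻ x in Set.Ioo (0:ℝ) 1, ∫⁻ y in Set.Ioo (0:ℝ) 1,
        ENNReal.ofReal ((x ^ σ - y ^ σ) ^ 2 / |x - y| ^ (1 + 2 * α)) < ⊤ := by
  obtain ⟨β, hαβ, hβ⟩ := exists_between (lt_min hα1 hασ)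
  obtain ⟨hβ1, hβσ⟩ := lt_min_iff.1 hβ
  set p := 2 * (σ - β)
  set q := 2 * β - (1 + 2 * α)
  refine setLIntegral_setLIntegral_lt_top_of_le_mul_sub
    (g := fun x ↦ ENNReal.ofReal (max 1 σ ^ 2 * (1 + x ^ p)))
    (h := fun t ↦ ENNReal.ofReal (|t| ^ q)) (by fun_prop) ?_ ?_ ?_
  · have hp : -1 < p := by linarith
    have hint : IntegrableOn (fun x : ℝ ↦ x ^ p) (Ioo 0 1) :=
      (intervalIntegral.integrableOn_Ioo_rpow_iff one_pos).2 hp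
    have hone : IntegrableOn (fun _ ↦ (1 : ℝ)) (Ioo (0 : ℝ) 1) :=
      integrableOn_const measure_Ioo_lt_top.ne
    exact ((hone.add hint).const_mul _).lintegral_lt_top
  · have hq : -1 < q := by linarith
    simpa using (integrableOn_Ioo_abs_rpow hq 1).lintegral_lt_top
  · intro x hx y hy
    rw [← ENNReal.ofReal_mul (by have := hx.1; positivity)]
    refine ENNReal.ofReal_le_ofReal ?_
    calc (x ^ σ - y ^ σ) ^ 2 / |x - y| ^ (1 + 2 * α)
      _ ≤ max 1 σ ^ 2 * max x y ^ p * |x - y| ^ q :=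
          Real.sq_rpow_sub_rpow_div_le hσ hβ1.le hx.1.le hy.1.le
      _ ≤ max 1 σ ^ 2 * (1 + x ^ p) * |x - y| ^ q := by
          gcongr
          exact Real.max_rpow_le_one_add_rpow hx.1 hx.2.le hy.2.le

/-- The power function `x ↦ x^σ` has finite Gagliardo (Slobodeckij) seminorm of order
`α` on `(0,1)` whenever `0 < α < 1` and `α < σ + 1/2`. -/
theorem power_function_gagliardo_finite (σ α : ℝ) (hσ : 0 < σ)
    (hα0 : 0 < α) (hα1 : α < 1) (hασ : α < σ + 1 / 2) :
    ∫⁻ x in Set.Ioo (0:ℝ) 1, ∫⁻ y in Set.Ioo (0:ℝ) 1,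
        ENNReal.ofReal ((x ^ σ - y ^ σ) ^ 2 / |x - y| ^ (1 + 2 * α)) < ⊤ :=
  power_function_gagliardo_finite_general σ α hσ hα1 hασ
end

section
/- Let 1 < s < 2 and let φ : [0,1] → ℝ be continuously differentiable with φ(0) = φ(1) = 0. Then ∫₀¹ [ (1/Γ(1−s/2)) ∫₀ˣ (x−t)^{−s/2} φ′(t) dt ] (1−x)^{s/2−1} dx = 0; that is, the left Riemann–Liouville derivative of order s/2 of φ is L²-orthogonal to the function (1−x)^{s/2−1} on (0,1). -/
/-!
Write the integral as a double integral over the triangle `0 < t < x < 1` and swap the order of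
integration; Fubini applies because the integrand is dominated by
`‖φ'‖∞ (x - t) ^ (-s/2) (1 - x) ^ (s/2 - 1)`, whose exponents both exceed `-1`.
For fixed `t`, the substitution `x = t + (1 - t) u` turns the inner integral
`∫ x in t..1, (x - t) ^ (-s/2) (1 - x) ^ (s/2 - 1)` into `(1 - t) ^ 0` times a Beta integral,
a constant because the exponents sum to `-1`. What remains is that constant times
`∫ t in 0..1, φ' t = φ 1 - φ 0 = 0`.
-/

open MeasureTheory Set intervalIntegral

theorem integral_sub_rpow_mul_rpow_sub {a b : ℝ} (hab : a < b) (p q : ℝ) :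
    ∫ x in a..b, (x - a) ^ p * (b - x) ^ q
      = (b - a) ^ (p + q + 1) * ∫ u in (0:ℝ)..1, u ^ p * (1 - u) ^ q := by
  have hba : 0 < b - a := sub_pos.mpr hab
  have hsub := smul_integral_comp_mul_add (a := 0) (b := 1)
    (fun x => (x - a) ^ p * (b - x) ^ q) (b - a) a
  simp only [mul_zero, zero_add, mul_one, sub_add_cancel] at hsub
  rw [← hsub, smul_eq_mul, ← intervalIntegral.integral_const_mul,
    ← intervalIntegral.integral_const_mul]
  refine integral_congr fun u hu => ?_
  rw [uIcc_of_le zero_le_one] at hu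
  have hu1 : 0 ≤ 1 - u := sub_nonneg.mpr hu.2
  simp only [show (b - a) * u + a - a = (b - a) * u by ring,
    show b - ((b - a) * u + a) = (b - a) * (1 - u) by ring,
    Real.mul_rpow hba.le hu.1, Real.mul_rpow hba.le hu1,
    Real.rpow_add hba, Real.rpow_one]
  ring

theorem intervalIntegrable_sub_rpow {p : ℝ} (hp : -1 < p) (a b : ℝ) :
    IntervalIntegrable (fun t => (b - t) ^ p) volume a b := by
  simpa using ((intervalIntegrable_rpow' hp (a := 0) (b := b - a)).comp_sub_left b).symm

theorem integral_sub_rpow {p : ℝ} (hp : -1 < p) (a b : ℝ) :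
    ∫ t in a..b, (b - t) ^ p = (b - a) ^ (p + 1) / (p + 1) := by
  rw [integral_comp_sub_left (fun u : ℝ => u ^ p) b, sub_self, integral_rpow (Or.inl hp),
    Real.zero_rpow (by linarith), sub_zero]

def triangle (a b : ℝ) : Set (ℝ × ℝ) := {z | a < z.2 ∧ z.2 < z.1 ∧ z.1 < b}

theorem isOpen_triangle (a b : ℝ) : IsOpen (triangle a b) :=
  (isOpen_lt continuous_const continuous_snd).inter
    ((isOpen_lt continuous_snd continuous_fst).inter (isOpen_lt continuous_fst continuous_const))

theorem indicator_triangle_eq_left {M : Type*} [Zero M] (a b : ℝ) (g : ℝ × ℝ → M)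
    (x t : ℝ) :
    (triangle a b).indicator g (x, t)
      = (Ioo a b).indicator (fun x => (Ioo a x).indicator (fun t => g (x, t)) t) x := by
  simp only [indicator_apply, triangle, mem_Ioo]
  split_ifs <;> grind

theorem indicator_triangle_eq_right {M : Type*} [Zero M] (a b : ℝ) (g : ℝ × ℝ → M)
    (x t : ℝ) :
    (triangle a b).indicator g (x, t)
      = (Ioo a b).indicator (fun t => (Ioo t b).indicator (fun x => g (x, t)) x) t := by
  simp only [indicator_apply, triangle, mem_Ioo]
  split_ifs <;> grind

theorem integrableOn_triangle_of_integral_norm_le {E : Type*} [NormedAddCommGroup E] {a b : ℝ}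
    {g : ℝ × ℝ → E} {B : ℝ → ℝ}
    (hg : ContinuousOn g (triangle a b))
    (hsec : ∀ x ∈ Ioo a b, IntegrableOn (fun t => g (x, t)) (Ioo a x))
    (hB : IntegrableOn B (Ioo a b))
    (hbound : ∀ x ∈ Ioo a b, ∫ t in Ioo a x, ‖g (x, t)‖ ≤ B x) :
    IntegrableOn g (triangle a b) (volume.prod volume) := by
  have hT := (isOpen_triangle a b).measurableSet
  rw [← integrable_indicator_iff hT]
  have hmeas : AEStronglyMeasurable ((triangle a b).indicator g) (volume.prod volume) :=
    (aestronglyMeasurable_indicator_iff hT).mpr (hg.aestronglyMeasurable hT)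
  refine (integrable_prod_iff hmeas).mpr ⟨.of_forall fun x => ?_, ?_⟩
  · simp only [indicator_triangle_eq_left]
    by_cases hx : x ∈ Ioo a b
    · simpa [hx, integrable_indicator_iff measurableSet_Ioo] using hsec x hx
    · simp [hx]
  · refine (hB.integrable_indicator measurableSet_Ioo).mono' hmeas.norm.integral_prod_right'
      (.of_forall fun x => ?_)
    simp only [indicator_triangle_eq_left, norm_indicator_eq_indicator_norm]
    by_cases hx : x ∈ Ioo a b
    · simp only [hx, indicator_of_mem, MeasureTheory.integral_indicator measurableSet_Ioo]
      rw [Real.norm_of_nonneg (setIntegral_nonneg measurableSet_Ioo fun _ _ => norm_nonneg _)]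
      exact hbound x hx
    · simp [hx]

section

variable {E : Type*} [NormedAddCommGroup E] [NormedSpace ℝ E]

theorem integral_indicator_Ioo {a b : ℝ} (hab : a ≤ b) (f : ℝ → E) :
    ∫ x, (Ioo a b).indicator f x = ∫ x in a..b, f x := by
  rw [MeasureTheory.integral_indicator measurableSet_Ioo, integral_of_le hab,
    integral_Ioc_eq_integral_Ioo]

theorem integral_indicator_apply_comm {s : Set ℝ} (F : ℝ → ℝ → E) (x : ℝ) :
    ∫ t, s.indicator (fun x => F x t) x = s.indicator (fun x => ∫ t, F x t) x := by
  by_cases hx : x ∈ s <;> simp [hx]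

theorem integral_integral_triangle_swap {a b : ℝ} (hab : a ≤ b) {g : ℝ × ℝ → E}
    (hg : IntegrableOn g (triangle a b) (volume.prod volume)) :
    ∫ x in a..b, ∫ t in a..x, g (x, t) = ∫ t in a..b, ∫ x in t..b, g (x, t) := by
  have hF := hg.integrable_indicator (isOpen_triangle a b).measurableSet
  calc ∫ x in a..b, ∫ t in a..x, g (x, t)
      = ∫ x, ∫ t, (triangle a b).indicator g (x, t) := by
        simp_rw [indicator_triangle_eq_left, integral_indicator_apply_comm]
        rw [integral_indicator_Ioo hab]
        refine integral_congr fun x hx => ?_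
        rw [uIcc_of_le hab] at hx
        exact (integral_indicator_Ioo hx.1 _).symm
    _ = ∫ t, ∫ x, (triangle a b).indicator g (x, t) := integral_integral_swap hF
    _ = ∫ t in a..b, ∫ x in t..b, g (x, t) := by
        simp_rw [indicator_triangle_eq_right, integral_indicator_apply_comm]
        rw [integral_indicator_Ioo hab]
        refine integral_congr fun t ht => ?_
        rw [uIcc_of_le hab] at ht
        exact integral_indicator_Ioo ht.2 _

end

theorem integrableOn_triangle_rpow_mul {a b p q : ℝ} (hp : -1 < p) (hq : -1 < q) {f : ℝ → ℝ}
    (hf : ContinuousOn f (Icc a b)) :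
    IntegrableOn (fun z : ℝ × ℝ => (z.1 - z.2) ^ p * f z.2 * (b - z.1) ^ q) (triangle a b)
      (volume.prod volume) := by
  obtain ⟨M, hM⟩ := isCompact_Icc.exists_bound_of_continuousOn hf
  have hsec : ∀ x ∈ Ioo a b,
      IntervalIntegrable (fun t => (x - t) ^ p * f t * (b - x) ^ q) volume a x := fun x hx =>
    ((intervalIntegrable_sub_rpow hp a x).mul_continuousOn
      (hf.mono (by rw [uIcc_of_le hx.1.le]; exact Icc_subset_Icc_right hx.2.le))).mul_const _
  refine integrableOn_triangle_of_integral_norm_le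
    (B := fun x => (x - a) ^ (p + 1) / (p + 1) * M * (b - x) ^ q) ?cont
    (fun x hx => (hsec x hx).1.mono_set Ioo_subset_Ioc_self) ?integrable fun x hx => ?bound
  case cont =>
    refine (((continuousOn_fst.sub continuousOn_snd).rpow_const fun z hz =>
      .inl (sub_pos.mpr hz.2.1).ne').mul (hf.comp continuousOn_snd fun z hz =>
        ⟨hz.1.le, hz.2.1.le.trans hz.2.2.le⟩)).mul
      ((continuousOn_const.sub continuousOn_fst).rpow_const fun z hz =>
        .inl (sub_pos.mpr hz.2.2).ne')
  case integrable =>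
    refine ((intervalIntegrable_sub_rpow hq a b).continuousOn_mul ?_).1.mono_set
      Ioo_subset_Ioc_self
    exact (((continuousOn_id.sub continuousOn_const).rpow_const fun _ _ =>
      .inr (by linarith)).div_const _).mul_const M
  case bound =>
    have hx0 : 0 ≤ b - x := sub_nonneg.mpr hx.2.le
    rw [← integral_Ioc_eq_integral_Ioo, ← integral_of_le hx.1.le]
    calc ∫ t in a..x, ‖(x - t) ^ p * f t * (b - x) ^ q‖
        ≤ ∫ t in a..x, (x - t) ^ p * M * (b - x) ^ q := by
          refine integral_mono_on hx.1.le (hsec x hx).norm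
            (((intervalIntegrable_sub_rpow hp a x).mul_const M).mul_const _) fun t ht => ?_
          have hxt : 0 ≤ x - t := sub_nonneg.mpr ht.2
          rw [norm_mul, norm_mul, Real.norm_of_nonneg (Real.rpow_nonneg hxt p),
            Real.norm_of_nonneg (Real.rpow_nonneg hx0 q)]
          gcongr
          exact hM t ⟨ht.1, ht.2.trans hx.2.le⟩
      _ = (x - a) ^ (p + 1) / (p + 1) * M * (b - x) ^ q := by
        rw [intervalIntegral.integral_mul_const, intervalIntegral.integral_mul_const,
          integral_sub_rpow hp]

/-- For `1 < s < 2` and `φ` continuously differentiable on `[0,1]` with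
`φ 0 = φ 1 = 0`, the left Riemann–Liouville derivative of order `s/2` of `φ`
is `L²`-orthogonal to `(1-x)^{s/2-1}` on `(0,1)`. -/
theorem rl_deriv_orthogonal_singular (s : ℝ) (hs1 : 1 < s) (hs2 : s < 2)
    (φ φ' : ℝ → ℝ)
    (hφ : ∀ x ∈ Set.Icc (0:ℝ) 1, HasDerivAt φ (φ' x) x)
    (hφ' : ContinuousOn φ' (Set.Icc 0 1))
    (h0 : φ 0 = 0) (h1 : φ 1 = 0) :
    ∫ x in (0:ℝ)..1,
        ((1 / Real.Gamma (1 - s / 2)) * ∫ t in (0:ℝ)..x, (x - t) ^ (-(s / 2)) * φ' t) *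
          (1 - x) ^ (s / 2 - 1) = 0 := by
  have hp : -1 < -(s / 2) := by linarith
  have hq : -1 < s / 2 - 1 := by linarith
  set p := -(s / 2)
  set q := s / 2 - 1
  have hpq : p + q + 1 = 0 := by ring
  have h01 : (0:ℝ) ≤ 1 := zero_le_one
  have hφ'_integral : ∫ t in (0:ℝ)..1, φ' t = 0 := by
    rw [integral_eq_sub_of_hasDerivAt (fun x hx => hφ x (uIcc_of_le h01 ▸ hx))
      (hφ'.intervalIntegrable_of_Icc h01), h0, h1, sub_zero]
  set B := ∫ u in (0:ℝ)..1, u ^ p * (1 - u) ^ q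
  have hinner : EqOn (fun t => ∫ x in t..1, (x - t) ^ p * φ' t * (1 - x) ^ q)
      (fun t => φ' t * B) (uIoo 0 1) := fun t ht => by
    have hfactor : ∀ x, (x - t) ^ p * φ' t * (1 - x) ^ q = φ' t * ((x - t) ^ p * (1 - x) ^ q) :=
      fun x => by ring
    simp_rw [hfactor, intervalIntegral.integral_const_mul]
    rw [integral_sub_rpow_mul_rpow_sub (uIoo_of_le h01 ▸ ht).2, hpq, Real.rpow_zero, one_mul]
  calc _ = 1 / Real.Gamma (1 - s / 2) *
        ∫ x in (0:ℝ)..1, ∫ t in (0:ℝ)..x, (x - t) ^ p * φ' t * (1 - x) ^ q := by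
        simp only [mul_assoc, ← intervalIntegral.integral_mul_const,
          intervalIntegral.integral_const_mul]
    _ = 1 / Real.Gamma (1 - s / 2) *
        ∫ t in (0:ℝ)..1, ∫ x in t..1, (x - t) ^ p * φ' t * (1 - x) ^ q := by
        rw [integral_integral_triangle_swap h01 (integrableOn_triangle_rpow_mul hp hq hφ')]
    _ = 0 := by
        rw [integral_congr_uIoo hinner, intervalIntegral.integral_mul_const, hφ'_integral,
          zero_mul, mul_zero]
end

section
/- Let V be a real normed vector space, V_h a linear subspace of V, A : V × V → ℝ a bilinear map, and c₀ > 0 with A(v, v) ≥ c₀ ‖v‖² for all v ∈ V. Let G assign to each u ∈ V a linear functional G(u) : V → ℝ satisfying the Lipschitz-type bound |(G(u) − G(w))(v)| ≤ l_M ‖u − w‖ ‖v‖ for all u, w, v ∈ V, where 0 ≤ l_M < c₀. Let F : V → ℝ, and suppose: u ∈ V satisfies A(u, v) + G(u)(v) = F(v) for all v ∈ V_h; u_h ∈ V_h satisfies A(u_h, v) + G(u_h)(v) = F(v) for all v ∈ V_h; and p ∈ V_h satisfies the Galerkin orthogonality A(u − p, v) = 0 for all v ∈ V_h. Then ‖p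 − u_h‖ ≤ (l_M/(c₀ − l_M)) ‖u − p‖, and consequently ‖u − u_h‖ ≤ (c₀/(c₀ − l_M)) ‖u − p‖. (This is the generalized Céa-type estimate underlying the a priori error bound for the Galerkin finite element method applied to the nonlinear fractional problem.) -/
/-!
Subtracting the discrete equation from the continuous one and using the Ritz orthogonality
`A(u - p, ·) = 0` on `V_h` gives `A(p - u_h, v) = (G u_h - G u)(v)` for `v ∈ V_h`. Testing with
`v = p - u_h`, coercivity and the Lipschitz bound yield `c₀ ‖p - u_h‖ ≤ l_M ‖u - u_h‖`, and the
triangle inequality `‖u - u_h‖ ≤ ‖u - p‖ + ‖p - u_h‖` turns this into both estimates, since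
`l_M < c₀` lets the `‖p - u_h‖` term be absorbed.
-/

theorem ritz_sub_galerkin_apply {R V : Type*} [CommRing R] [AddCommGroup V] [Module R V]
    (Vh : Submodule R V) (A : V →ₗ[R] V →ₗ[R] R) (G : V → V →ₗ[R] R) (F : V → R) {u uh p : V}
    (hu : ∀ v ∈ Vh, A u v + G u v = F v) (huh : ∀ v ∈ Vh, A uh v + G uh v = F v)
    (hritz : ∀ v ∈ Vh, A (u - p) v = 0) {v : V} (hv : v ∈ Vh) :
    A (p - uh) v = (G uh - G u) v := by
  have hsplit : p - uh = (u - uh) - (u - p) := by abel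
  rw [hsplit, map_sub, LinearMap.sub_apply, map_sub, LinearMap.sub_apply, LinearMap.sub_apply]
  linear_combination hu v hv - huh v hv - hritz v hv

theorem mul_norm_le_of_coercive {V : Type*} [SeminormedAddCommGroup V] [Module ℝ V]
    (A : V →ₗ[ℝ] V →ₗ[ℝ] ℝ) {c₀ K : ℝ} (hcoer : ∀ v : V, c₀ * ‖v‖ ^ 2 ≤ A v v) (hK : 0 ≤ K)
    {e : V} (he : A e e ≤ K * ‖e‖) : c₀ * ‖e‖ ≤ K := by
  rcases (norm_nonneg e).eq_or_lt with h0 | hpos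
  · rwa [← h0, mul_zero]
  · refine le_of_mul_le_mul_right ?_ hpos
    calc c₀ * ‖e‖ * ‖e‖ = c₀ * ‖e‖ ^ 2 := by ring
      _ ≤ K * ‖e‖ := (hcoer e).trans he

theorem cea_bounds_of_mul_le {c l d e : ℝ} (hl : l < c) (h : c * e ≤ l * (d + e)) :
    e ≤ l / (c - l) * d ∧ d + e ≤ c / (c - l) * d := by
  have hgap : 0 < c - l := sub_pos.mpr hl
  have he : e ≤ l / (c - l) * d := by
    rw [div_mul_eq_mul_div, le_div_iff₀ hgap]
    linarith
  refine ⟨he, ?_⟩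
  have hsplit : c / (c - l) * d = d + l / (c - l) * d := by
    field_simp
    ring
  linarith

theorem galerkin_cea_estimate_general {V : Type*} [NormedAddCommGroup V] [NormedSpace ℝ V]
    (Vh : Submodule ℝ V) (A : V →ₗ[ℝ] V →ₗ[ℝ] ℝ) (c₀ lM : ℝ)
    (hlM0 : 0 ≤ lM) (hlM : lM < c₀)
    (hcoer : ∀ v : V, c₀ * ‖v‖ ^ 2 ≤ A v v)
    (G : V → (V →ₗ[ℝ] ℝ))
    (hG : ∀ u w v : V, |(G u - G w) v| ≤ lM * ‖u - w‖ * ‖v‖)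
    (F : V → ℝ) (u uh p : V) (huh : uh ∈ Vh) (hp : p ∈ Vh)
    (hu : ∀ v ∈ Vh, A u v + G u v = F v)
    (huh' : ∀ v ∈ Vh, A uh v + G uh v = F v)
    (hritz : ∀ v ∈ Vh, A (u - p) v = 0) :
    ‖p - uh‖ ≤ (lM / (c₀ - lM)) * ‖u - p‖ ∧
      ‖u - uh‖ ≤ (c₀ / (c₀ - lM)) * ‖u - p‖ := by
  have hcoer_err : c₀ * ‖p - uh‖ ≤ lM * ‖u - uh‖ := by
    refine mul_norm_le_of_coercive A hcoer (by positivity) ?_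
    calc A (p - uh) (p - uh) = (G uh - G u) (p - uh) :=
          ritz_sub_galerkin_apply Vh A G F hu huh' hritz (Vh.sub_mem hp huh)
      _ ≤ |(G uh - G u) (p - uh)| := le_abs_self _
      _ ≤ lM * ‖uh - u‖ * ‖p - uh‖ := hG uh u (p - uh)
      _ = lM * ‖u - uh‖ * ‖p - uh‖ := by rw [norm_sub_rev]
  have htri : ‖u - uh‖ ≤ ‖u - p‖ + ‖p - uh‖ := norm_sub_le_norm_sub_add_norm_sub u p uh
  obtain ⟨hdisc, htotal⟩ :=
    cea_bounds_of_mul_le hlM (hcoer_err.trans (mul_le_mul_of_nonneg_left htri hlM0))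
  exact ⟨hdisc, htri.trans htotal⟩

/-- Generalized Céa-type a priori estimate for the Galerkin method applied to the
nonlinear fractional problem: with `A` coercive with constant `c₀`, `G` Lipschitz
with constant `l_M < c₀`, `u` the weak solution, `u_h` the discrete solution, and
`p ∈ V_h` the Ritz projection of `u` (`A(u - p, v) = 0` for `v ∈ V_h`), one has
`‖p - u_h‖ ≤ (l_M/(c₀ - l_M)) ‖u - p‖` and `‖u - u_h‖ ≤ (c₀/(c₀ - l_M)) ‖u - p‖`. -/
theorem galerkin_cea_estimate {V : Type*} [NormedAddCommGroup V] [NormedSpace ℝ V]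
    (Vh : Submodule ℝ V) (A : V →ₗ[ℝ] V →ₗ[ℝ] ℝ) (c₀ lM : ℝ)
    (hc₀ : 0 < c₀) (hlM0 : 0 ≤ lM) (hlM : lM < c₀)
    (hcoer : ∀ v : V, c₀ * ‖v‖ ^ 2 ≤ A v v)
    (G : V → (V →ₗ[ℝ] ℝ))
    (hG : ∀ u w v : V, |(G u - G w) v| ≤ lM * ‖u - w‖ * ‖v‖)
    (F : V → ℝ) (u uh p : V) (huh : uh ∈ Vh) (hp : p ∈ Vh)
    (hu : ∀ v ∈ Vh, A u v + G u v = F v)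
    (huh' : ∀ v ∈ Vh, A uh v + G uh v = F v)
    (hritz : ∀ v ∈ Vh, A (u - p) v = 0) :
    ‖p - uh‖ ≤ (lM / (c₀ - lM)) * ‖u - p‖ ∧
      ‖u - uh‖ ≤ (c₀ / (c₀ - lM)) * ‖u - p‖ :=
  galerkin_cea_estimate_general Vh A c₀ lM hlM0 hlM hcoer G hG F u uh p huh hp hu huh' hritz
end
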